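/- Let F : ℝ^d → ℝ be convex and differentiable, satisfy F(v) ≤ 0 whenever all coordinates of v are ≤ 0, be 'positive invariant and L-smooth': F((x+y)⁺) ≤ F(x) + ⟨∇F(x), y⟩ + (L/2)‖y‖² for all x, y. Let (s_t) and (m_t) be sequences in ℝ^d, define S⁺_t = (S⁺_{t-1} + s_t)⁺ with S⁺_0 = 0, let 0 < η_t ≤ η_{t-1} be decreasing positive step sizes, and assume ⟨∇F(η_t(S⁺_{t-1} + m_t)), s_t⟩ ≤ 0 for all t. Then F(η_T · S⁺_T) ≤ (L/2) ∑_{t=1}^T η_T η_t ‖s_t − m_t‖². -/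

import Mathlib

/-!
With `x = η_t (S⁺_{t-1} + m_t)` and `y = η_t (s_t - m_t)` we have `x + y = η_t (S⁺_{t-1} + s_t)`,
and clipping commutes with the positive scaling `η_t`. Positive-invariant smoothness at `(x, y)`,
the supporting hyperplane of `F` at `x` evaluated at `η_t S⁺_{t-1}`, and the Blackwell condition
give `F(η_t S⁺_t) ≤ F(η_t S⁺_{t-1}) + (L/2) η_t² ‖s_t - m_t‖²`. Convexity and `F 0 ≤ 0` give
`F(η_t S⁺_{t-1}) ≤ (η_t / η_{t-1}) F(η_{t-1} S⁺_{t-1})` since `η_t ≤ η_{t-1}`, so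
`F(η_t S⁺_t) / η_t` grows by at most `(L/2) η_t ‖s_t - m_t‖²` per round.
-/

open RealInnerProductSpace

theorem ConvexOn.add_fderiv_sub_le {E : Type*} [NormedAddCommGroup E] [NormedSpace ℝ E]
    {f : E → ℝ} {f' : E →L[ℝ] ℝ} {x : E} (hf : ConvexOn ℝ Set.univ f) (hx : HasFDerivAt f f' x)
    (y : E) : f x + f' (y - x) ≤ f y := by
  have hline : ConvexOn ℝ Set.univ (f ∘ AffineMap.lineMap (k := ℝ) x y) := by
    simpa using hf.comp_affineMap (AffineMap.lineMap x y)
  have hderiv : HasDerivAt (f ∘ AffineMap.lineMap (k := ℝ) x y) (f' (y - x)) 0 := by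
    refine HasFDerivAt.comp_hasDerivAt (0 : ℝ) ?_ AffineMap.hasDerivAt_lineMap
    simpa using hx
  have := hline.le_slope_of_hasDerivAt (Set.mem_univ 0) (Set.mem_univ 1) one_pos hderiv
  simp only [slope_def_field, Function.comp_apply, AffineMap.lineMap_apply_one,
    AffineMap.lineMap_apply_zero, sub_zero, div_one] at this
  linarith

theorem ConvexOn.map_smul_le_of_map_zero_nonpos {𝕜 E : Type*} [Ring 𝕜] [PartialOrder 𝕜]
    [IsOrderedRing 𝕜] [AddCommGroup E] [Module 𝕜 E] {s : Set E} {f : E → 𝕜}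
    (hf : ConvexOn 𝕜 s f) (h0 : (0 : E) ∈ s) (hf0 : f 0 ≤ 0) {x : E} (hx : x ∈ s) {c : 𝕜}
    (hc₀ : 0 ≤ c) (hc₁ : c ≤ 1) : f (c • x) ≤ c * f x := by
  have := hf.2 hx h0 hc₀ (sub_nonneg.2 hc₁) (add_sub_cancel c 1)
  simp only [smul_zero, add_zero, smul_eq_mul] at this
  exact this.trans
    (add_le_of_nonpos_right (mul_nonpos_of_nonneg_of_nonpos (sub_nonneg.2 hc₁) hf0))

theorem le_mul_sum_of_le_div_mul_add {Φ η a : ℕ → ℝ} {T : ℕ} (hη : ∀ t, 0 < η t) (h0 : Φ 0 ≤ 0)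
    (hstep : ∀ t < T, Φ (t + 1) ≤ η (t + 1) / η t * Φ t + η (t + 1) * a (t + 1)) :
    ∀ t ≤ T, Φ t ≤ η t * ∑ τ ∈ Finset.Icc 1 t, a τ := by
  intro t
  induction t with
  | zero => simpa using h0
  | succ t ih =>
    intro ht
    have hratio : 0 ≤ η (t + 1) / η t := div_nonneg (hη _).le (hη _).le
    calc Φ (t + 1) ≤ η (t + 1) / η t * Φ t + η (t + 1) * a (t + 1) := hstep t ht
      _ ≤ η (t + 1) / η t * (η t * ∑ τ ∈ Finset.Icc 1 t, a τ) + η (t + 1) * a (t + 1) := by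
        gcongr; exact ih (by omega)
      _ = η (t + 1) * ∑ τ ∈ Finset.Icc 1 (t + 1), a τ := by
        rw [Finset.sum_Icc_succ_top (by omega), ← mul_assoc, div_mul_cancel₀ _ (hη t).ne']
        ring

def relu {ι : Type*} (v : EuclideanSpace ℝ ι) : EuclideanSpace ℝ ι :=
  WithLp.toLp 2 fun i => max (v i) 0

theorem relu_smul {ι : Type*} {c : ℝ} (hc : 0 ≤ c) (v : EuclideanSpace ℝ ι) :
    relu (c • v) = c • relu v := by
  ext i
  simp [relu, mul_max_of_nonneg _ _ hc]

theorem potential_relu_step_le {ι : Type*} [Fintype ι] {F : EuclideanSpace ℝ ι → ℝ}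
    {g : EuclideanSpace ℝ ι → EuclideanSpace ℝ ι} {L η : ℝ} {S s m : EuclideanSpace ℝ ι}
    (hconv : ConvexOn ℝ Set.univ F)
    (hsmooth : ∀ x y, F (relu (x + y)) ≤ F x + ⟪g x, y⟫ + L / 2 * ‖y‖ ^ 2)
    (hdiff : HasGradientAt F (g (η • (S + m))) (η • (S + m))) (hη : 0 ≤ η)
    (hblackwell : ⟪g (η • (S + m)), s⟫ ≤ 0) :
    F (η • relu (S + s)) ≤ F (η • S) + L / 2 * (η ^ 2 * ‖s - m‖ ^ 2) := by
  set x := η • (S + m)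
  have hclip : η • relu (S + s) = relu (x + η • (s - m)) := by
    rw [← relu_smul hη]; congr 1; module
  have hsupport : F x + ⟪g x, η • S - x⟫ ≤ F (η • S) := by
    simpa using hconv.add_fderiv_sub_le hdiff.hasFDerivAt (η • S)
  have hinner : ⟪g x, η • (s - m)⟫ = η * ⟪g x, s⟫ + ⟪g x, η • S - x⟫ := by
    rw [show η • S - x = -(η • m) by module, inner_neg_right, inner_smul_right,
      inner_smul_right, inner_sub_right]
    ring
  have hnorm : ‖η • (s - m)‖ ^ 2 = η ^ 2 * ‖s - m‖ ^ 2 := by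
    rw [norm_smul, mul_pow, Real.norm_eq_abs, sq_abs]
  have hsm := hsmooth x (η • (s - m))
  rw [← hclip, hinner, hnorm] at hsm
  nlinarith [mul_nonpos_of_nonneg_of_nonpos hη hblackwell]

theorem stmt_13 {d : ℕ} (T : ℕ)
    (F : EuclideanSpace ℝ (Fin d) → ℝ)
    (g : EuclideanSpace ℝ (Fin d) → EuclideanSpace ℝ (Fin d))
    (hdiff : ∀ x, HasGradientAt F (g x) x)
    (hconv : ConvexOn ℝ Set.univ F)
    (hFneg : ∀ v : EuclideanSpace ℝ (Fin d), (∀ i, v i ≤ 0) → F v ≤ 0)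
    (L : ℝ)
    (hsmooth : ∀ x y : EuclideanSpace ℝ (Fin d),
      F (WithLp.toLp 2 (fun i => max (x i + y i) 0)) ≤ F x + ⟪g x, y⟫ + L / 2 * ‖y‖ ^ 2)
    (s m : ℕ → EuclideanSpace ℝ (Fin d))
    (Splus : ℕ → EuclideanSpace ℝ (Fin d))
    (hS0 : Splus 0 = 0)
    (hSrec : ∀ t, 1 ≤ t → Splus t = WithLp.toLp 2 (fun i => max ((Splus (t - 1) + s t) i) 0))
    (η : ℕ → ℝ) (hηpos : ∀ t, 0 < η t) (hηdec : ∀ t, 1 ≤ t → η t ≤ η (t - 1))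
    (hblackwell : ∀ t ∈ Finset.Icc 1 T,
      ⟪g (η t • (Splus (t - 1) + m t)), s t⟫ ≤ 0) :
    F (η T • Splus T) ≤ L / 2 * ∑ t ∈ Finset.Icc 1 T, η T * η t * ‖s t - m t‖ ^ 2 := by
  have hF0 : F 0 ≤ 0 := hFneg 0 fun _ => le_rfl
  have hstep : ∀ t < T, F (η (t + 1) • Splus (t + 1)) ≤ η (t + 1) / η t * F (η t • Splus t) +
      η (t + 1) * (L / 2 * (η (t + 1) * ‖s (t + 1) - m (t + 1)‖ ^ 2)) := by
    intro t ht
    have hratio : η (t + 1) / η t ≤ 1 := (div_le_one (hηpos t)).2 (hηdec (t + 1) le_add_self)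
    have hshrink := hconv.map_smul_le_of_map_zero_nonpos (Set.mem_univ 0) hF0
      (Set.mem_univ (η t • Splus t)) (div_nonneg (hηpos _).le (hηpos _).le) hratio
    rw [smul_smul, div_mul_cancel₀ _ (hηpos t).ne'] at hshrink
    have hrec : Splus (t + 1) = relu (Splus t + s (t + 1)) := hSrec (t + 1) le_add_self
    have hrelu := potential_relu_step_le (S := Splus t) hconv hsmooth (hdiff _)
      (hηpos (t + 1)).le (hblackwell (t + 1) (Finset.mem_Icc.2 ⟨le_add_self, ht⟩))
    rw [hrec]
    linarith
  calc F (η T • Splus T)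
      ≤ η T * ∑ t ∈ Finset.Icc 1 T, L / 2 * (η t * ‖s t - m t‖ ^ 2) :=
        le_mul_sum_of_le_div_mul_add (Φ := fun t => F (η t • Splus t)) hηpos
          (by simpa [hS0] using hF0) hstep T le_rfl
    _ = L / 2 * ∑ t ∈ Finset.Icc 1 T, η T * η t * ‖s t - m t‖ ^ 2 := by
        simp only [Finset.mul_sum]
        exact Finset.sum_congr rfl fun t _ => by ring
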